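/- Under the same notation, the loss of quantum Fisher information F(ρ_θ) − F(𝒩(ρ_θ)) equals ∑_j ‖(𝓛_θ E_j − E_j L_θ)√ρ_θ‖²_HS, and hence F(ρ_θ) ≥ F(𝒩(ρ_θ)) with equality if and only if 𝓛_θ E_j √ρ_θ = E_j L_θ √ρ_θ for all j. -/

import Mathlib

/-!
For every Hermitian `Q`, expanding `∑ⱼ ‖(Q Eⱼ − Eⱼ L)√ρ‖²_HS` and using cyclicity of the trace
together with `∑ⱼ Eⱼᴴ Eⱼ = 1` gives `Tr(ρ L²) − Tr(Q 𝒩(Lρ + ρL)) + Tr(𝒩(ρ) Q²)`. For `Q = 𝓛`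
the SLD equation `𝒩(Lρ + ρL) = 𝓛 𝒩(ρ) + 𝒩(ρ) 𝓛` turns the middle term into `2 Tr(𝒩(ρ) 𝓛²)`, so
the loss of QFI is a sum of Hilbert–Schmidt norms: a nonnegative real number that vanishes exactly
when every `(𝓛 Eⱼ − Eⱼ L)√ρ` does.
-/

open Matrix
open scoped ComplexOrder

/-- The positive semidefinite square root of a positive semidefinite matrix
(the definition `Matrix.PosSemidef.sqrt` of Mathlib of December 2024, since removed). -/
noncomputable def Matrix.PosSemidef.sqrt {m : Type*} [Fintype m] [DecidableEq m]
    {𝕜 : Type*} [RCLike 𝕜] {A : Matrix m m 𝕜} (hA : A.PosSemidef) : Matrix m m 𝕜 :=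
  hA.1.eigenvectorUnitary.1 * diagonal ((↑) ∘ (fun x : ℝ => Real.sqrt x) ∘ hA.1.eigenvalues) *
  (star hA.1.eigenvectorUnitary : Matrix m m 𝕜)

namespace Matrix.PosSemidef

variable {m 𝕜 : Type*} [Fintype m] [DecidableEq m] [RCLike 𝕜] {A : Matrix m m 𝕜}

lemma sqrt_mul_self (hA : A.PosSemidef) : hA.sqrt * hA.sqrt = A := by
  have hU : (star hA.1.eigenvectorUnitary : Matrix m m 𝕜) * hA.1.eigenvectorUnitary.1 = 1 :=
    Unitary.coe_star_mul_self _
  conv_rhs => rw [hA.1.spectral_theorem, Unitary.conjStarAlgAut_apply]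
  unfold Matrix.PosSemidef.sqrt
  rw [show ∀ a b c d e : Matrix m m 𝕜, a * b * c * (d * e * c) = a * b * (c * d) * e * c by
    intro a b c d e; simp only [mul_assoc], hU, mul_one, mul_assoc _ (diagonal _) (diagonal _),
    diagonal_mul_diagonal]
  congr 3
  funext i
  simp only [Function.comp_apply, ← RCLike.ofReal_mul, Real.mul_self_sqrt (hA.eigenvalues_nonneg i)]

lemma isHermitian_sqrt (hA : A.PosSemidef) : hA.sqrt.IsHermitian :=
  isHermitian_mul_mul_conjTranspose _ <| isHermitian_diagonal_iff.2 fun i => by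
    simp [isSelfAdjoint_iff]

lemma trace_conjTranspose_mul_self_mul_sqrt {n : Type*} [Fintype n] (hA : A.PosSemidef)
    (X : Matrix n m 𝕜) : ((X * hA.sqrt)ᴴ * (X * hA.sqrt)).trace = (X * A * Xᴴ).trace := by
  conv_rhs => rw [← hA.sqrt_mul_self]
  rw [conjTranspose_mul, hA.isHermitian_sqrt.eq, trace_mul_comm]
  simp only [Matrix.mul_assoc]

end Matrix.PosSemidef

section Kraus

variable {ι m R : Type*} [Fintype ι] [Fintype m] [CommRing R]

lemma trace_mul_mul_add_mul [DecidableEq m] (Q σ : Matrix m m R) :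
    (Q * (Q * σ + σ * Q)).trace = 2 * (σ * Q ^ 2).trace := by
  rw [Matrix.mul_add, trace_add, ← Matrix.mul_assoc, trace_mul_comm, ← Matrix.mul_assoc,
    trace_mul_comm Q, pow_two, Matrix.mul_assoc]
  ring

variable [StarRing R]

def krausMap (E : ι → Matrix m m R) (X : Matrix m m R) : Matrix m m R :=
  ∑ j, E j * X * (E j)ᴴ

lemma krausMap_add (E : ι → Matrix m m R) (X Y : Matrix m m R) :
    krausMap E (X + Y) = krausMap E X + krausMap E Y := by
  simp only [krausMap, Matrix.mul_add, Matrix.add_mul, Finset.sum_add_distrib]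

lemma trace_krausMap [DecidableEq m] {E : ι → Matrix m m R} (hE : ∑ j, (E j)ᴴ * E j = 1)
    (X : Matrix m m R) : (krausMap E X).trace = X.trace := by
  simp_rw [krausMap, trace_sum, trace_mul_cycle _ X, ← trace_sum, ← Finset.sum_mul, hE, one_mul]

lemma sum_sub_mul_conjTranspose_eq {E : ι → Matrix m m R} (Q L X : Matrix m m R) :
    ∑ j, (Q * E j - E j * L) * X * (Q * E j - E j * L)ᴴ
      = Q * krausMap E X * Qᴴ - Q * krausMap E (X * Lᴴ) - krausMap E (L * X) * Qᴴ
        + krausMap E (L * X * Lᴴ) := by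
  simp only [krausMap, Finset.mul_sum, Finset.sum_mul, ← Finset.sum_sub_distrib,
    ← Finset.sum_add_distrib, conjTranspose_sub, conjTranspose_mul]
  refine Finset.sum_congr rfl fun j _ => ?_
  noncomm_ring

theorem sum_trace_sub_mul_conjTranspose [DecidableEq m] {E : ι → Matrix m m R}
    (hE : ∑ j, (E j)ᴴ * E j = 1) {Q L : Matrix m m R} (hQ : Q.IsHermitian) (hL : L.IsHermitian)
    (ρ : Matrix m m R) :
    ∑ j, ((Q * E j - E j * L) * ρ * (Q * E j - E j * L)ᴴ).trace
      = (ρ * L ^ 2).trace - (Q * krausMap E (L * ρ + ρ * L)).trace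
        + (krausMap E ρ * Q ^ 2).trace := by
  have hQQ : (krausMap E ρ * Q ^ 2).trace = (Q * krausMap E ρ * Q).trace := by
    rw [pow_two, ← Matrix.mul_assoc, trace_mul_comm, ← Matrix.mul_assoc]
  have hLL : (ρ * L ^ 2).trace = (L * ρ * L).trace := by
    rw [pow_two, ← Matrix.mul_assoc, trace_mul_comm, ← Matrix.mul_assoc]
  rw [← trace_sum, sum_sub_mul_conjTranspose_eq, hQ.eq, hL.eq, krausMap_add, Matrix.mul_add,
    trace_add, trace_add, trace_sub, trace_sub, trace_krausMap hE, ← hQQ, ← hLL,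
    trace_mul_comm _ Q]
  ring

end Kraus

lemma Complex.re_eq_re_iff_of_le {z w : ℂ} (h : w ≤ z) : z.re = w.re ↔ z = w := by
  rw [Complex.ext_iff, (Complex.le_def.1 h).2, and_iff_left rfl]

theorem trace_sub_trace_krausMap_eq_sum {ι m 𝕜 : Type*} [Fintype ι] [Fintype m] [DecidableEq m]
    [RCLike 𝕜] {ρ L 𝓛 : Matrix m m 𝕜} (hρ : ρ.PosSemidef) (hL : L.IsHermitian)
    (h𝓛 : 𝓛.IsHermitian) {E : ι → Matrix m m 𝕜} (hE : ∑ j, (E j)ᴴ * E j = 1)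
    (hSLD : krausMap E (L * ρ + ρ * L) = 𝓛 * krausMap E ρ + krausMap E ρ * 𝓛) :
    (ρ * L ^ 2).trace - (krausMap E ρ * 𝓛 ^ 2).trace
      = ∑ j, (((𝓛 * E j - E j * L) * hρ.sqrt)ᴴ * ((𝓛 * E j - E j * L) * hρ.sqrt)).trace := by
  simp_rw [hρ.trace_conjTranspose_mul_self_mul_sqrt, sum_trace_sub_mul_conjTranspose hE h𝓛 hL,
    hSLD, trace_mul_mul_add_mul]
  ring

theorem qfi_loss_eq_and_monotone_general
    {n : ℕ} {ι : Type*} [Fintype ι]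
    (ρ L 𝓛 : Matrix (Fin n) (Fin n) ℂ) (hρ : ρ.PosSemidef)
    (hL : L.IsHermitian) (h𝓛 : 𝓛.IsHermitian)
    (E : ι → Matrix (Fin n) (Fin n) ℂ)
    (hKraus : ∑ j, (E j)ᴴ * E j = 1)
    (hSLDout : ∑ j, E j * (L * ρ + ρ * L) * (E j)ᴴ
      = 𝓛 * (∑ j, E j * ρ * (E j)ᴴ) + (∑ j, E j * ρ * (E j)ᴴ) * 𝓛) :
    (ρ * L ^ 2).trace - ((∑ j, E j * ρ * (E j)ᴴ) * 𝓛 ^ 2).trace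
        = ∑ j, (((𝓛 * E j - E j * L) * hρ.sqrt)ᴴ * ((𝓛 * E j - E j * L) * hρ.sqrt)).trace
      ∧ ((∑ j, E j * ρ * (E j)ᴴ) * 𝓛 ^ 2).trace.re ≤ (ρ * L ^ 2).trace.re
      ∧ ((ρ * L ^ 2).trace.re = ((∑ j, E j * ρ * (E j)ᴴ) * 𝓛 ^ 2).trace.re
          ↔ ∀ j, 𝓛 * E j * hρ.sqrt = E j * L * hρ.sqrt) := by
  change (ρ * L ^ 2).trace - (krausMap E ρ * 𝓛 ^ 2).trace = _
    ∧ (krausMap E ρ * 𝓛 ^ 2).trace.re ≤ _ ∧ (_ = (krausMap E ρ * 𝓛 ^ 2).trace.re ↔ _)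
  have hloss := trace_sub_trace_krausMap_eq_sum hρ hL h𝓛 hKraus hSLDout
  have hHS (j : ι) :
      0 ≤ (((𝓛 * E j - E j * L) * hρ.sqrt)ᴴ * ((𝓛 * E j - E j * L) * hρ.sqrt)).trace :=
    (posSemidef_conjTranspose_mul_self _).trace_nonneg
  have hle : (krausMap E ρ * 𝓛 ^ 2).trace ≤ (ρ * L ^ 2).trace :=
    sub_nonneg.1 (hloss ▸ Finset.sum_nonneg fun j _ => hHS j)
  refine ⟨hloss, (Complex.le_def.1 hle).1, ?_⟩
  rw [Complex.re_eq_re_iff_of_le hle, ← sub_eq_zero, hloss,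
    Finset.sum_eq_zero_iff_of_nonneg fun j _ => hHS j]
  simp only [Finset.mem_univ, true_implies, trace_conjTranspose_mul_self_eq_zero_iff, sub_mul,
    sub_eq_zero]

/-- The loss of QFI equals `∑_j ‖(𝓛 E_j − E_j L)√ρ‖²_HS`; hence `F(ρ) ≥ F(𝒩(ρ))`
with equality iff `𝓛 E_j √ρ = E_j L √ρ` for all `j`. -/
theorem qfi_loss_eq_and_monotone
    {n : ℕ} {ι : Type*} [Fintype ι]
    (ρ L 𝓛 : Matrix (Fin n) (Fin n) ℂ) (hρ : ρ.PosSemidef)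
    (hρtr : ρ.trace = 1) (hL : L.IsHermitian) (h𝓛 : 𝓛.IsHermitian)
    (E : ι → Matrix (Fin n) (Fin n) ℂ)
    (hKraus : ∑ j, (E j)ᴴ * E j = 1)
    (hSLDout : ∑ j, E j * (L * ρ + ρ * L) * (E j)ᴴ
      = 𝓛 * (∑ j, E j * ρ * (E j)ᴴ) + (∑ j, E j * ρ * (E j)ᴴ) * 𝓛) :
    (ρ * L ^ 2).trace - ((∑ j, E j * ρ * (E j)ᴴ) * 𝓛 ^ 2).trace
        = ∑ j, (((𝓛 * E j - E j * L) * hρ.sqrt)ᴴ * ((𝓛 * E j - E j * L) * hρ.sqrt)).trace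
      ∧ ((∑ j, E j * ρ * (E j)ᴴ) * 𝓛 ^ 2).trace.re ≤ (ρ * L ^ 2).trace.re
      ∧ ((ρ * L ^ 2).trace.re = ((∑ j, E j * ρ * (E j)ᴴ) * 𝓛 ^ 2).trace.re
          ↔ ∀ j, 𝓛 * E j * hρ.sqrt = E j * L * hρ.sqrt) :=
  qfi_loss_eq_and_monotone_general ρ L 𝓛 hρ hL h𝓛 E hKraus hSLDout
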